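/- In Case A, the following are equivalent: (a) either the limit M_∞ = lim_{t→∞} M_t fails to exist as a finite limit with positive probability, or M_∞ exists almost surely but E|M_∞| = ∞; (b) E(|L′|·1_{γ<∞}) = ∞ or ∫_{[0,t_G)} |H(s)| dG(s) = ∞. -/

import Mathlib

/-!
On `{γ < ∞}` the path of `M` is eventually equal to `H(γ) + L'`; on `{γ = ∞}` it is `F`, which by
Condition M converges to `(F(0)Ḡ(0) - ∫_{(0,∞)} H dG) / P(γ = ∞)` when `P(γ = ∞) > 0` (then
`t_G = ∞`). So `M_∞` exists a.s. and is integrable iff `(H(γ) + L')·1_{γ<∞}` is. In Case A the law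
of `γ` charges no point of `[t_G, ∞)`, so the two conditions give this integrability. Conversely,
`E[L' | γ] = 0` gives `∫_B H dG = E[M_∞; γ ∈ B]` for Borel `B ⊆ [0, t]`, `t < t_G`; splitting `B`
by the sign of `H` bounds `∫_{[0,t]} |H| dG` by `E|M_∞|`, and letting `t ↑ t_G` gives
`∫_{[0,t_G)} |H| dG < ∞`, after which `L'·1_{γ<∞} = (M_∞ - H(γ))·1_{γ<∞}` is integrable.
-/

open MeasureTheory Filter Set Topology
open scoped ENNReal NNReal Classical

noncomputable section

namespace SingleJump

variable {Ω : Type*}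

/-- The event `{γ > t}`. -/
def jumpSet (γ : Ω → ℝ≥0∞) (t : ℝ≥0) : Set Ω := {ω | (t : ℝ≥0∞) < γ ω}

/-- The collection `𝒻_t` of the single jump filtration generated by `γ` and the σ-field `m`:
`A ∈ 𝒻_t` iff `A` is `m`-measurable and `A ∩ {γ > t}` is either `∅` or `{γ > t}`. -/
def jumpColl (m : MeasurableSpace Ω) (γ : Ω → ℝ≥0∞) (t : ℝ≥0) : Set (Set Ω) :=
  {A | MeasurableSet[m] A ∧ (A ∩ jumpSet γ t = ∅ ∨ A ∩ jumpSet γ t = jumpSet γ t)}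

/-- `𝒻_t` as a σ-field (the collection `jumpColl` generates itself, see Proposition 1(i)). -/
def jumpσ (m : MeasurableSpace Ω) (γ : Ω → ℝ≥0∞) (t : ℝ≥0) : MeasurableSpace Ω :=
  MeasurableSpace.generateFrom (jumpColl m γ t)

/-- `𝒻_∞ = σ(⋃_{t ∈ ℝ₊} 𝒻_t)`. -/
def jumpσInf (m : MeasurableSpace Ω) (γ : Ω → ℝ≥0∞) : MeasurableSpace Ω :=
  ⨆ t : ℝ≥0, jumpσ m γ t

/-- A real function on `ℝ≥0` is càdlàg: right-continuous everywhere, finite left limits. -/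
def Cadlag (f : ℝ≥0 → ℝ) : Prop :=
  (∀ t, ContinuousWithinAt f (Ici t) t) ∧
    ∀ t : ℝ≥0, 0 < t → ∃ c : ℝ, Tendsto f (𝓝[<] t) (𝓝 c)

/-- The filter of times `t ∈ ℝ≥0` with `t ↑ a` strictly from the left (this is `atTop`
when `a = ∞`). -/
def leftF (a : ℝ≥0∞) : Filter ℝ≥0 := Filter.comap (fun t : ℝ≥0 => (t : ℝ≥0∞)) (𝓝[<] a)

/-- Total variation of `f` over `[0,∞)`, including `|f 0|` (the paper's convention `Var`). -/
def totalVar (f : ℝ≥0 → ℝ) : ℝ≥0∞ := (‖f 0‖₊ : ℝ≥0∞) + eVariationOn f Set.univ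

/-- The process `M` stopped at the (possibly infinite) random time `T`. -/
def stopped (M : ℝ≥0 → Ω → ℝ) (T : Ω → ℝ≥0∞) : ℝ≥0 → Ω → ℝ :=
  fun t ω => M (((t : ℝ≥0∞) ⊓ T ω).toNNReal) ω

section WithMeasurableSpace

variable [m : MeasurableSpace Ω]

/-- `Ḡ(t) = 1 - G(t) = P(γ > t)`. -/
def Gbar (μ : Measure Ω) (γ : Ω → ℝ≥0∞) (t : ℝ≥0) : ℝ :=
  (μ {ω | (t : ℝ≥0∞) < γ ω}).toReal

/-- `Ḡ(t-) = P(γ ≥ t)`, the left-hand limit of `Ḡ` at `t`. -/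
def GbarLeft (μ : Measure Ω) (γ : Ω → ℝ≥0∞) (t : ℝ≥0) : ℝ :=
  (μ {ω | (t : ℝ≥0∞) ≤ γ ω}).toReal

/-- `t_G = sup {t ∈ ℝ₊ : G(t) < 1}`, the right endpoint of the law of `γ`. -/
def tG (μ : Measure Ω) (γ : Ω → ℝ≥0∞) : ℝ≥0∞ :=
  sSup ((fun t : ℝ≥0 => (t : ℝ≥0∞)) '' {t : ℝ≥0 | μ {ω | γ ω ≤ (t : ℝ≥0∞)} < 1})

/-- `𝒯 = {t ∈ ℝ₊ : P(γ ≥ t) > 0}`. -/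
def TT (μ : Measure Ω) (γ : Ω → ℝ≥0∞) : Set ℝ≥0 :=
  {t | 0 < μ {ω | (t : ℝ≥0∞) ≤ γ ω}}

/-- Case A: `P(γ = t_G < ∞) = 0`. -/
def CaseA (μ : Measure Ω) (γ : Ω → ℝ≥0∞) : Prop :=
  μ {ω | γ ω = tG μ γ ∧ tG μ γ < ⊤} = 0

/-- Case B: `P(γ = t_G < ∞) > 0`. -/
def CaseB (μ : Measure Ω) (γ : Ω → ℝ≥0∞) : Prop :=
  0 < μ {ω | γ ω = tG μ γ ∧ tG μ γ < ⊤}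

/-- `z ∈ L¹_loc(dG)` : `z` is Borel and `∫_{[0,t]} |z(s)| dG(s) < ∞` for every `t ∈ 𝒯`,
where `dG` is the law of `γ` (a measure on `[0,∞]`). -/
def MemL1loc (μ : Measure Ω) (γ : Ω → ℝ≥0∞) (z : ℝ≥0 → ℝ) : Prop :=
  Measurable z ∧ ∀ t ∈ TT μ γ,
    IntegrableOn (fun x : ℝ≥0∞ => z x.toNNReal) (Icc 0 (t : ℝ≥0∞)) (μ.map γ)

/-- `F loc≪ G` with density `z = dF/dG` : `F(t) = F(0) + ∫_(0,t] z(s) dG(s)` for `t < t_G`. -/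
def LocAC (μ : Measure Ω) (γ : Ω → ℝ≥0∞) (F z : ℝ≥0 → ℝ) : Prop :=
  MemL1loc μ γ z ∧ ∀ t : ℝ≥0, (t : ℝ≥0∞) < tG μ γ →
    F t = F 0 + ∫ x in Ioc (0 : ℝ≥0∞) (t : ℝ≥0∞), z x.toNNReal ∂(μ.map γ)

/-- Condition M for the pair `(F, H)`. -/
def CondM (μ : Measure Ω) (γ : Ω → ℝ≥0∞) (F H : ℝ≥0 → ℝ) : Prop :=
  (∃ z, LocAC μ γ F z) ∧ MemL1loc μ γ H ∧
  (∀ t : ℝ≥0, (t : ℝ≥0∞) < tG μ γ →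
    F t * Gbar μ γ t + ∫ x in Ioc (0 : ℝ≥0∞) (t : ℝ≥0∞), H x.toNNReal ∂(μ.map γ)
      = F 0 * Gbar μ γ 0) ∧
  (CaseB μ γ → Tendsto F (leftF (tG μ γ)) (𝓝 (H (tG μ γ).toNNReal)))

/-- A stopping time of the single jump filtration: `{T ≤ t} ∈ 𝒻_t` for all `t ∈ ℝ₊`. -/
def IsSJStoppingTime (γ : Ω → ℝ≥0∞) (T : Ω → ℝ≥0∞) : Prop :=
  ∀ t : ℝ≥0, {ω | T ω ≤ (t : ℝ≥0∞)} ∈ jumpColl m γ t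

/-- The martingale property on a set `S` of times, w.r.t. the single jump filtration. -/
def MartingaleOn (μ : Measure Ω) (γ : Ω → ℝ≥0∞) (M : ℝ≥0 → Ω → ℝ) (S : Set ℝ≥0) : Prop :=
  (∀ t ∈ S, Measurable[jumpσ m γ t] (M t)) ∧ (∀ t ∈ S, Integrable (M t) μ) ∧
    ∀ s ∈ S, ∀ t ∈ S, s ≤ t → μ[M t|jumpσ m γ s] =ᵐ[μ] M s

/-- A uniformly integrable martingale w.r.t. the single jump filtration. -/
def UIMartingale (μ : Measure Ω) (γ : Ω → ℝ≥0∞) (M : ℝ≥0 → Ω → ℝ) : Prop :=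
  MartingaleOn μ γ M Set.univ ∧ UniformIntegrable M 1 μ

/-- A local martingale w.r.t. the single jump filtration: adapted, a.s. càdlàg paths, and
there are stopping times `T n ↑ ∞` a.s. with each stopped process a UI martingale. -/
def LocalMartingale (μ : Measure Ω) (γ : Ω → ℝ≥0∞) (M : ℝ≥0 → Ω → ℝ) : Prop :=
  (∀ t : ℝ≥0, Measurable[jumpσ m γ t] (M t)) ∧
  (∀ᵐ ω ∂μ, Cadlag fun t => M t ω) ∧
  ∃ T : ℕ → Ω → ℝ≥0∞,
    (∀ n, IsSJStoppingTime γ (T n)) ∧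
    (∀ᵐ ω ∂μ, Monotone (fun n => T n ω) ∧ Tendsto (fun n => T n ω) atTop (𝓝 (⊤ : ℝ≥0∞))) ∧
    ∀ n, UIMartingale μ γ (stopped M (T n))

/-- `E[L' | γ] = 0` for a (possibly only locally integrable) random variable `L'`. -/
def CondZeroGivenGamma (μ : Measure Ω) (γ : Ω → ℝ≥0∞) (L' : Ω → ℝ) : Prop :=
  ∀ B : Set ℝ≥0∞, MeasurableSet B → IntegrableOn L' (γ ⁻¹' B) μ →
    ∫ ω in γ ⁻¹' B, L' ω ∂μ = 0


section LawOfJumpTime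

variable {μ : Measure Ω} {γ : Ω → ℝ≥0∞}

lemma measure_lt_eq_zero_of_tG_lt [IsProbabilityMeasure μ] (hγ : Measurable γ) {s : ℝ≥0∞}
    (hs : tG μ γ < s) : μ {ω | s < γ ω} = 0 := by
  rcases eq_or_ne s ⊤ with rfl | hs_top
  · simp
  lift s to ℝ≥0 using hs_top
  have hle : μ {ω | γ ω ≤ s} = 1 := by
    by_contra h
    exact hs.not_ge (le_sSup ⟨s, prob_le_one.lt_of_ne h, rfl⟩)
  simpa [compl_ofPred, not_le] using
    (prob_compl_eq_zero_iff (s := {ω | γ ω ≤ (s : ℝ≥0∞)}) (hγ measurableSet_Iic)).2 hle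

lemma measure_tG_lt_eq_zero [IsProbabilityMeasure μ] (hγ : Measurable γ) :
    μ {ω | tG μ γ < γ ω} = 0 := by
  have hcover : {ω | tG μ γ < γ ω} ⊆ ⋃ q : ℚ,
      {ω | tG μ γ < ((q : ℝ).toNNReal : ℝ≥0∞) ∧ ((q : ℝ).toNNReal : ℝ≥0∞) < γ ω} := by
    intro ω hω
    obtain ⟨q, -, hq⟩ := ENNReal.lt_iff_exists_rat_btwn.1 hω
    exact mem_iUnion.2 ⟨q, hq⟩
  refine measure_mono_null hcover (measure_iUnion_null fun q => ?_)
  by_cases hq : tG μ γ < ((q : ℝ).toNNReal : ℝ≥0∞)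
  · exact measure_mono_null (fun ω hω => hω.2) (measure_lt_eq_zero_of_tG_lt hγ hq)
  · simp [hq]

lemma mem_TT_of_lt_tG [IsProbabilityMeasure μ] (hγ : Measurable γ) {t : ℝ≥0}
    (ht : (t : ℝ≥0∞) < tG μ γ) : t ∈ TT μ γ := by
  obtain ⟨_, ⟨s, hs, rfl⟩, hts⟩ := lt_sSup_iff.1 ht
  have hcompl : μ {ω | γ ω ≤ s}ᶜ ≠ 0 := fun h =>
    hs.ne ((prob_compl_eq_zero_iff (hγ measurableSet_Iic)).1 h)
  refine pos_iff_ne_zero.2 fun h => hcompl (measure_mono_null (fun ω hω => ?_) h)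
  exact hts.le.trans (not_le.1 (show ¬ γ ω ≤ s from hω)).le

lemma tG_eq_top_of_measure_eq_top_ne_zero [IsProbabilityMeasure μ] (hγ : Measurable γ)
    (h : μ {ω | γ ω = ⊤} ≠ 0) : tG μ γ = ⊤ := by
  by_contra hne
  obtain ⟨s, hs, hs_top⟩ := exists_between (lt_top_iff_ne_top.2 hne)
  refine h (measure_mono_null (fun ω hω => ?_) (measure_lt_eq_zero_of_tG_lt hγ hs))
  rw [mem_ofPred_eq, hω]
  exact hs_top

lemma tendsto_Gbar_atTop [IsFiniteMeasure μ] (hγ : Measurable γ) :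
    Tendsto (Gbar μ γ) atTop (𝓝 (μ {ω | γ ω = ⊤}).toReal) := by
  have hanti : Antitone fun t : ℝ≥0 => {ω | (t : ℝ≥0∞) < γ ω} :=
    fun s t hst ω hω => (ENNReal.coe_le_coe.2 hst).trans_lt hω
  have hinter : ⋂ t : ℝ≥0, {ω | (t : ℝ≥0∞) < γ ω} = {ω | γ ω = ⊤} := by
    ext ω
    simp only [mem_iInter, mem_ofPred_eq]
    refine ⟨fun h => ?_, fun h t => h ▸ ENNReal.coe_lt_top⟩
    by_contra hne
    exact (h (γ ω).toNNReal).ne (ENNReal.coe_toNNReal hne)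
  have hlim := tendsto_measure_iInter_atTop (μ := μ) (s := fun t : ℝ≥0 => {ω | (t : ℝ≥0∞) < γ ω})
    (fun t => (hγ measurableSet_Ioi).nullMeasurableSet) hanti ⟨0, measure_ne_top μ _⟩
  rw [hinter] at hlim
  exact (ENNReal.tendsto_toReal (measure_ne_top μ _)).comp hlim

lemma CaseA.integrableOn_Iio_top [IsProbabilityMeasure μ] (hγ : Measurable γ)
    (hA : CaseA μ γ) {g : ℝ≥0∞ → ℝ} (hg : IntegrableOn g (Iio (tG μ γ)) (μ.map γ)) :
    IntegrableOn g (Iio ⊤) (μ.map γ) := by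
  refine hg.congr_set_ae (ae_eq_set.2 ⟨?_, by simp⟩)
  rw [Measure.map_apply hγ (measurableSet_Iio.diff measurableSet_Iio)]
  refine measure_mono_null (fun ω hω => ?_) (measure_union_null hA (measure_tG_lt_eq_zero hγ))
  simp only [mem_preimage, Set.mem_sdiff, mem_Iio, not_lt] at hω
  rcases hω.2.eq_or_lt with h | h
  · exact Or.inl ⟨h.symm, h ▸ hω.1⟩
  · exact Or.inr h

end LawOfJumpTime

lemma setLIntegral_Iio_le_of_forall_lt {ν : Measure ℝ≥0∞} {f : ℝ≥0∞ → ℝ≥0∞} {a C : ℝ≥0∞}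
    (h : ∀ b : ℝ≥0, (b : ℝ≥0∞) < a → ∫⁻ x in Iic (b : ℝ≥0∞), f x ∂ν ≤ C) :
    ∫⁻ x in Iio a, f x ∂ν ≤ C := by
  rcases eq_zero_or_pos a with rfl | ha
  · simp
  obtain ⟨u, hu_mono, hu_mem, hu_lim⟩ := exists_seq_strictMono_tendsto' ha
  have hcover : Iio a = ⋃ n, Iic (u n) := by
    refine Subset.antisymm (fun x hx => ?_)
      (iUnion_subset fun n => Iic_subset_Iio.2 (hu_mem n).2)
    obtain ⟨n, hn⟩ := ((tendsto_order.1 hu_lim).1 x hx).exists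
    exact mem_iUnion.2 ⟨n, hn.le⟩
  have hu_ne_top : ∀ n, u n ≠ ⊤ := fun n => ne_top_of_lt (hu_mem n).2
  calc ∫⁻ x in Iio a, f x ∂ν = ν.withDensity f (⋃ n, Iic (u n)) := by
        rw [hcover, withDensity_apply _ (.iUnion fun _ => measurableSet_Iic)]
    _ = ⨆ n, ν.withDensity f (Iic (u n)) :=
        Monotone.measure_iUnion fun _ _ hmn => Iic_subset_Iic.2 (hu_mono.monotone hmn)
    _ ≤ C := iSup_le fun n => by
        rw [withDensity_apply _ measurableSet_Iic, ← ENNReal.coe_toNNReal (hu_ne_top n)]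
        exact h _ ((ENNReal.coe_toNNReal (hu_ne_top n)).symm ▸ (hu_mem n).2)

lemma _root_.MeasureTheory.IntegrableOn.comp_of_map {α β : Type*} [MeasurableSpace α]
    [MeasurableSpace β] {μ : Measure α} {f : α → β} {g : β → ℝ} {s : Set β} (hf : Measurable f)
    (hs : MeasurableSet s) (hg : IntegrableOn g s (μ.map f)) :
    IntegrableOn (g ∘ f) (f ⁻¹' s) μ := by
  rw [IntegrableOn, Measure.restrict_map hf hs] at hg
  exact (integrable_map_measure hg.1 hf.aemeasurable).1 hg

lemma setIntegral_norm_map_le_integral_norm {α : Type*} [MeasurableSpace α] {μ : Measure Ω}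
    [IsFiniteMeasure μ] {γ : Ω → α} (hγ : Measurable γ) {g : α → ℝ} (hg : Measurable g)
    {B : Set α} (hB : MeasurableSet B) (hgB : IntegrableOn g B (μ.map γ)) {Z : Ω → ℝ}
    (hZ : Integrable Z μ)
    (h : ∀ s, MeasurableSet s → s ⊆ B → ∫ ω in γ ⁻¹' s, g (γ ω) ∂μ = ∫ ω in γ ⁻¹' s, Z ω ∂μ) :
    ∫ x in B, ‖g x‖ ∂(μ.map γ) ≤ ∫ ω, ‖Z ω‖ ∂μ := by
  obtain ⟨Z', hZ'_meas, hZZ'⟩ := hZ.1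
  have hgZ' : ∀ t, MeasurableSet[MeasurableSpace.comap γ inferInstance] t →
      μ.restrict (γ ⁻¹' B) t < ∞ →
      ∫ ω in t, g (γ ω) ∂μ.restrict (γ ⁻¹' B) = ∫ ω in t, Z' ω ∂μ.restrict (γ ⁻¹' B) := by
    rintro _ ⟨s, hs, rfl⟩ -
    rw [Measure.restrict_restrict (hγ hs), ← preimage_inter, h _ (hs.inter hB) inter_subset_right]
    exact setIntegral_congr_ae (hγ (hs.inter hB)) (hZZ'.mono fun ω hω _ => hω)
  calc ∫ x in B, ‖g x‖ ∂(μ.map γ) = ∫ ω in γ ⁻¹' B, ‖g (γ ω)‖ ∂μ :=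
        setIntegral_map hB hg.norm.aestronglyMeasurable hγ.aemeasurable
    _ ≤ ∫ ω in γ ⁻¹' B, ‖Z' ω‖ ∂μ := by
        simpa only [Measure.restrict_univ, Function.comp_apply] using
          integral_norm_le_of_forall_fin_meas_integral_eq hγ.comap_le hZ'_meas
            (integrableOn_univ.2 (hZ.congr hZZ').restrict)
            (hg.comp (comap_measurable γ)).stronglyMeasurable
            (integrableOn_univ.2 (hgB.comp_of_map hγ hB)) hgZ' MeasurableSet.univ
            (measure_ne_top _ _)
    _ = ∫ ω in γ ⁻¹' B, ‖Z ω‖ ∂μ :=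
        integral_congr_ae (ae_restrict_of_ae (hZZ'.symm.fun_comp norm))
    _ ≤ ∫ ω, ‖Z ω‖ ∂μ := setIntegral_le_integral hZ.norm (.of_forall fun _ => norm_nonneg _)

lemma tendsto_ite_coe_lt_atTop {F : ℝ≥0 → ℝ} {a : ℝ≥0∞} (ha : a < ⊤) (x : ℝ) :
    Tendsto (fun t : ℝ≥0 => if (t : ℝ≥0∞) < a then F t else x) atTop (𝓝 x) := by
  refine tendsto_const_nhds.congr' ((eventually_ge_atTop a.toNNReal).mono fun t ht => ?_)
  exact (if_neg (not_lt.2 ((ENNReal.coe_toNNReal ha.ne).symm.le.trans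
    (ENNReal.coe_le_coe.2 ht)))).symm

lemma ae_tendsto_piecewise {μ : Measure Ω} {γ : Ω → ℝ≥0∞} {M : ℝ≥0 → Ω → ℝ}
    {F H : ℝ≥0 → ℝ} {L' : Ω → ℝ} {c : ℝ}
    (hrepr : ∀ᵐ ω ∂μ, ∀ t : ℝ≥0,
      M t ω = if (t : ℝ≥0∞) < γ ω then F t else H (γ ω).toNNReal + L' ω)
    (hF : ∀ᵐ ω ∂μ, γ ω = ⊤ → Tendsto F atTop (𝓝 c)) :
    ∀ᵐ ω ∂μ, Tendsto (fun t => M t ω) atTop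
      (𝓝 ({ω | γ ω < ⊤}.piecewise (fun ω => H (γ ω).toNNReal + L' ω) (fun _ => c) ω)) := by
  filter_upwards [hrepr, hF] with ω hω hFω
  simp only [hω]
  by_cases hlt : γ ω < ⊤
  · rw [piecewise_eq_of_mem _ _ _ (show ω ∈ {ω | γ ω < ⊤} from hlt)]
    exact tendsto_ite_coe_lt_atTop hlt _
  · have htop := not_lt_top_iff.1 hlt
    rw [piecewise_eq_of_notMem _ _ _ (show ω ∉ {ω | γ ω < ⊤} from hlt)]
    refine (hFω htop).congr fun t => ?_
    rw [if_pos (htop ▸ ENNReal.coe_lt_top)]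

section Limit

variable {μ : Measure Ω} [IsProbabilityMeasure μ] {γ : Ω → ℝ≥0∞} {F H : ℝ≥0 → ℝ} {L' : Ω → ℝ}

lemma integrableOn_Iio_tG_of_integrable_limit (hγ : Measurable γ) (hH : MemL1loc μ γ H)
    (hL'int : ∀ t ∈ TT μ γ,
      Integrable (fun ω => ({ω' | γ ω' ≤ (t : ℝ≥0∞)}.indicator L') ω) μ)
    (hL'cond : CondZeroGivenGamma μ γ L') {Z : Ω → ℝ} (hZ : Integrable Z μ)
    (hZeq : ∀ᵐ ω ∂μ, γ ω < ⊤ → Z ω = H (γ ω).toNNReal + L' ω) :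
    IntegrableOn (fun x : ℝ≥0∞ => H x.toNNReal) (Iio (tG μ γ)) (μ.map γ) := by
  set g : ℝ≥0∞ → ℝ := fun x => H x.toNNReal
  have hg : Measurable g := hH.1.comp ENNReal.measurable_toNNReal
  have hbound : ∀ t : ℝ≥0, (t : ℝ≥0∞) < tG μ γ →
      ∫⁻ x in Iic (t : ℝ≥0∞), ‖g x‖ₑ ∂(μ.map γ) ≤ ENNReal.ofReal (∫ ω, ‖Z ω‖ ∂μ) := by
    intro t ht
    have htT := mem_TT_of_lt_tG hγ ht
    have hgt : IntegrableOn g (Iic (t : ℝ≥0∞)) (μ.map γ) := by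
      rw [← Icc_bot]
      exact hH.2 t htT
    have hL't : IntegrableOn L' (γ ⁻¹' Iic (t : ℝ≥0∞)) μ :=
      (integrable_indicator_iff (hγ measurableSet_Iic)).1 (hL'int t htT)
    rw [← ofReal_integral_norm_eq_lintegral_enorm hgt]
    refine ENNReal.ofReal_le_ofReal (setIntegral_norm_map_le_integral_norm hγ hg
      measurableSet_Iic hgt hZ fun s hs hst => ?_)
    have hL's := hL't.mono_set (preimage_mono hst)
    calc ∫ ω in γ ⁻¹' s, g (γ ω) ∂μ
        = ∫ ω in γ ⁻¹' s, g (γ ω) ∂μ + ∫ ω in γ ⁻¹' s, L' ω ∂μ := by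
          rw [hL'cond s hs hL's, add_zero]
      _ = ∫ ω in γ ⁻¹' s, Z ω ∂μ := by
          rw [← integral_add (by exact (hgt.mono_set hst).comp_of_map hγ hs) hL's]
          refine setIntegral_congr_ae (hγ hs) (hZeq.mono fun ω hω hωs => (hω ?_).symm)
          exact (hst hωs).trans_lt ENNReal.coe_lt_top
  exact ⟨hg.aestronglyMeasurable,
    (setLIntegral_Iio_le_of_forall_lt hbound).trans_lt ENNReal.ofReal_lt_top⟩

lemma CondM.tendsto_atTop (hγ : Measurable γ) (hFH : CondM μ γ F H)
    (hinf : μ {ω | γ ω = ⊤} ≠ 0)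
    (hH : IntegrableOn (fun x : ℝ≥0∞ => H x.toNNReal) (Iio ⊤) (μ.map γ)) :
    Tendsto F atTop (𝓝 ((F 0 * Gbar μ γ 0 - ∫ x in Ioo 0 ⊤, H x.toNNReal ∂(μ.map γ)) /
      (μ {ω | γ ω = ⊤}).toReal)) := by
  have htG := tG_eq_top_of_measure_eq_top_ne_zero hγ hinf
  have hpos : 0 < (μ {ω | γ ω = ⊤}).toReal := ENNReal.toReal_pos hinf (measure_ne_top μ _)
  have hGbar_pos : ∀ t, 0 < Gbar μ γ t := fun t =>
    hpos.trans_le (ENNReal.toReal_mono (measure_ne_top μ _) (measure_mono fun ω hω =>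
      show (t : ℝ≥0∞) < γ ω from (show γ ω = ⊤ from hω) ▸ ENNReal.coe_lt_top))
  have hUnion : ⋃ t : ℝ≥0, Ioc (0 : ℝ≥0∞) t = Ioo 0 ⊤ := by
    ext x
    simp only [mem_iUnion, mem_Ioc, mem_Ioo]
    refine ⟨fun ⟨t, hx0, hxt⟩ => ⟨hx0, hxt.trans_lt ENNReal.coe_lt_top⟩,
      fun ⟨hx0, hx⟩ => ⟨x.toNNReal, hx0, (ENNReal.coe_toNNReal hx.ne).ge⟩⟩
  have hI : Tendsto (fun t : ℝ≥0 => ∫ x in Ioc 0 (t : ℝ≥0∞), H x.toNNReal ∂(μ.map γ)) atTop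
      (𝓝 (∫ x in Ioo 0 ⊤, H x.toNNReal ∂(μ.map γ))) :=
    hUnion ▸ tendsto_setIntegral_of_monotone (fun _ => measurableSet_Ioc)
      (fun s t hst => Ioc_subset_Ioc_right (ENNReal.coe_le_coe.2 hst))
      (hUnion ▸ hH.mono_set Ioo_subset_Iio_self)
  refine ((tendsto_const_nhds.sub hI).div (tendsto_Gbar_atTop hγ) hpos.ne').congr fun t => ?_
  simp only [Pi.div_apply]
  rw [div_eq_iff (hGbar_pos t).ne', ← hFH.2.2.1 t (htG ▸ ENNReal.coe_lt_top)]
  ring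

lemma CondM.exists_ae_tendsto_atTop (hγ : Measurable γ) (hFH : CondM μ γ F H)
    (hH : IntegrableOn (fun x : ℝ≥0∞ => H x.toNNReal) (Iio ⊤) (μ.map γ)) :
    ∃ c, ∀ᵐ ω ∂μ, γ ω = ⊤ → Tendsto F atTop (𝓝 c) := by
  by_cases hinf : μ {ω | γ ω = ⊤} = 0
  · exact ⟨0, (measure_eq_zero_iff_ae_notMem.1 hinf).mono fun ω hω htop => absurd htop hω⟩
  · exact ⟨_, .of_forall fun _ _ => hFH.tendsto_atTop hγ hinf hH⟩

end Limit

theorem stmt_12_general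
(μ : Measure Ω) [IsProbabilityMeasure μ] (γ : Ω → ℝ≥0∞)
    (hγ : Measurable γ)
    (M : ℝ≥0 → Ω → ℝ) (F H : ℝ≥0 → ℝ) (L' : Ω → ℝ)
    (hFH : CondM μ γ F H)
    (hL'int : ∀ t ∈ TT μ γ,
      Integrable (fun ω => ({ω' | γ ω' ≤ (t : ℝ≥0∞)}.indicator L') ω) μ)
    (hL'cond : CondZeroGivenGamma μ γ L')
    (hrepr : ∀ᵐ ω ∂μ, ∀ t : ℝ≥0,
      M t ω = if (t : ℝ≥0∞) < γ ω then F t else H (γ ω).toNNReal + L' ω)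
    (hA : CaseA μ γ) :
    (¬ ∃ Z : Ω → ℝ,
        (∀ᵐ ω ∂μ, Tendsto (fun t => M t ω) atTop (𝓝 (Z ω))) ∧ Integrable Z μ) ↔
      (¬ Integrable (fun ω => ({ω' | γ ω' < ⊤}.indicator L') ω) μ ∨
        ¬ IntegrableOn (fun x : ℝ≥0∞ => H x.toNNReal) (Iio (tG μ γ)) (μ.map γ)) := by
  have hlt_top : MeasurableSet {ω | γ ω < ⊤} := hγ measurableSet_Iio
  rw [← not_and_or, not_iff_not, integrable_indicator_iff hlt_top]
  constructor
  · rintro ⟨Z, hZ, hZint⟩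
    have hZeq : ∀ᵐ ω ∂μ, γ ω < ⊤ → Z ω = H (γ ω).toNNReal + L' ω := by
      filter_upwards [hZ, hrepr] with ω hZω hω hlt
      exact tendsto_nhds_unique hZω (by simpa only [hω] using tendsto_ite_coe_lt_atTop hlt _)
    have hH := integrableOn_Iio_tG_of_integrable_limit hγ hFH.2.1 hL'int hL'cond hZint hZeq
    have hHγ := (hA.integrableOn_Iio_top hγ hH).comp_of_map hγ measurableSet_Iio
    refine ⟨(hZint.integrableOn.sub hHγ).congr_fun_ae ?_, hH⟩
    filter_upwards [ae_restrict_of_ae hZeq, ae_restrict_mem hlt_top] with ω hω hlt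
    simp [hω hlt]
  · rintro ⟨hL', hH⟩
    have hHtop := hA.integrableOn_Iio_top hγ hH
    obtain ⟨c, hc⟩ := hFH.exists_ae_tendsto_atTop hγ hHtop
    exact ⟨_, ae_tendsto_piecewise hrepr hc, Integrable.piecewise hlt_top
      ((hHtop.comp_of_map hγ measurableSet_Iio).add hL') (integrable_const c).integrableOn⟩

/-- **Theorem 5 (i), Case A.** `M` has type 1 — i.e. the limit `M_∞` fails to exist as a
finite limit with positive probability, or it exists a.s. but is not integrable — iff
`E(|L'|·1_{γ<∞}) = ∞` or `∫_{[0,t_G)} |H| dG = ∞`. -/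
theorem stmt_12
(μ : Measure Ω) [IsProbabilityMeasure μ] (γ : Ω → ℝ≥0∞)
    (hγ : Measurable γ) (hpos : 0 < μ {ω | 0 < γ ω})
    (M : ℝ≥0 → Ω → ℝ) (F H : ℝ≥0 → ℝ) (L' : Ω → ℝ)
    (hM : LocalMartingale μ γ M)
    (hFH : CondM μ γ F H)
    (hL'meas : Measurable L')
    (hL'int : ∀ t ∈ TT μ γ,
      Integrable (fun ω => ({ω' | γ ω' ≤ (t : ℝ≥0∞)}.indicator L') ω) μ)
    (hL'cond : CondZeroGivenGamma μ γ L')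
    (hrepr : ∀ᵐ ω ∂μ, ∀ t : ℝ≥0,
      M t ω = if (t : ℝ≥0∞) < γ ω then F t else H (γ ω).toNNReal + L' ω)
    (hA : CaseA μ γ) :
    (¬ ∃ Z : Ω → ℝ,
        (∀ᵐ ω ∂μ, Tendsto (fun t => M t ω) atTop (𝓝 (Z ω))) ∧ Integrable Z μ) ↔
      (¬ Integrable (fun ω => ({ω' | γ ω' < ⊤}.indicator L') ω) μ ∨
        ¬ IntegrableOn (fun x : ℝ≥0∞ => H x.toNNReal) (Iio (tG μ γ)) (μ.map γ)) :=
  stmt_12_general μ γ hγ M F H L' hFH hL'int hL'cond hrepr hA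

end WithMeasurableSpace

end SingleJump
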